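/- arXiv:2403.01141 — 2 statements merged into one kernel-verified Lean document; each statement's English description precedes it below -/
import Mathlib

section
/- Let u : ℝᵈ → ℝ be continuous ℤᵈ-periodic and S continuous, coercive, diagonal-periodic, locally semiconcave, C¹ and ferromagnetic. For y ∈ ℝᵈ: there exists a unique x with T⁻[u](y) = u(x) + S(x,y) if and only if T⁻[u] is differentiable at y. -/
open Filter Topology

/-- The discrete backward Lax-Oleinik operator. -/
noncomputable def Tminus {d : ℕ} (S : (Fin d → ℝ) → (Fin d → ℝ) → ℝ)
    (u : (Fin d → ℝ) → ℝ) : (Fin d → ℝ) → ℝ :=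
  fun y => ⨅ x, (u x + S x y)

/-- The discrete forward Lax-Oleinik operator. -/
noncomputable def Tplus {d : ℕ} (S : (Fin d → ℝ) → (Fin d → ℝ) → ℝ)
    (u : (Fin d → ℝ) → ℝ) : (Fin d → ℝ) → ℝ :=
  fun x => ⨆ y, (u y - S x y)

/-- ℤᵈ-periodicity. -/
def ZPeriodic {d : ℕ} (u : (Fin d → ℝ) → ℝ) : Prop :=
  ∀ (m : Fin d → ℤ) (x : Fin d → ℝ), u (x + fun i => (m i : ℝ)) = u x

/-- Coercivity: S(x,y) → +∞ as ‖x−y‖ → ∞. -/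
def Coercive {d : ℕ} (S : (Fin d → ℝ) → (Fin d → ℝ) → ℝ) : Prop :=
  ∀ M : ℝ, ∃ R : ℝ, ∀ x y : Fin d → ℝ, R ≤ ‖x - y‖ → M ≤ S x y

/-- Diagonal periodicity: S(x+m, y+m) = S(x,y) for m ∈ ℤᵈ. -/
def DiagPeriodic {d : ℕ} (S : (Fin d → ℝ) → (Fin d → ℝ) → ℝ) : Prop :=
  ∀ (m : Fin d → ℤ) (x y : Fin d → ℝ),
    S (x + fun i => (m i : ℝ)) (y + fun i => (m i : ℝ)) = S x y

/-- Semiconcavity with a linear modulus. -/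
def Semiconcave {d : ℕ} (v : (Fin d → ℝ) → ℝ) : Prop :=
  ∃ C : ℝ, 0 ≤ C ∧ ∀ x y : Fin d → ℝ, ∀ θ : ℝ, θ ∈ Set.Icc (0:ℝ) 1 →
    θ * v x + (1 - θ) * v y - v (θ • x + (1 - θ) • y) ≤
      C / 2 * θ * (1 - θ) * ‖x - y‖ ^ 2

/-- Local semiconcavity (with linear modulus) on a normed space. -/
def LocallySemiconcave {E : Type*} [NormedAddCommGroup E] [NormedSpace ℝ E]
    (f : E → ℝ) : Prop :=
  ∀ x : E, ∃ U ∈ 𝓝 x, Convex ℝ U ∧ ∃ C : ℝ, 0 ≤ C ∧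
    ∀ y ∈ U, ∀ z ∈ U, ∀ θ : ℝ, θ ∈ Set.Icc (0:ℝ) 1 →
      θ * f y + (1 - θ) * f z - f (θ • y + (1 - θ) • z) ≤
        C / 2 * θ * (1 - θ) * ‖y - z‖ ^ 2

/-- The ferromagnetic property: S is C¹ and the partial-derivative maps
`y ↦ ∂₁S(x,y)` and `x ↦ ∂₂S(x,y)` are homeomorphisms. -/
def Ferromagnetic {d : ℕ} (S : (Fin d → ℝ) → (Fin d → ℝ) → ℝ) : Prop :=
  ContDiff ℝ 1 (fun p : (Fin d → ℝ) × (Fin d → ℝ) => S p.1 p.2) ∧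
  (∀ x : Fin d → ℝ, ∃ h : (Fin d → ℝ) ≃ₜ ((Fin d → ℝ) →L[ℝ] ℝ),
      ∀ y, h y = fderiv ℝ (fun t => S t y) x) ∧
  (∀ y : Fin d → ℝ, ∃ h : (Fin d → ℝ) ≃ₜ ((Fin d → ℝ) →L[ℝ] ℝ),
      ∀ x, h x = fderiv ℝ (fun t => S x t) y)

/-!
Minimizers of `x ↦ u x + S x t` exist by coercivity, `u` being bounded below by periodicity.
If `x` is a minimizer at `y`, then `t ↦ u x + S x t` touches `T⁻[u]` from above at `y`, so at a
point of differentiability `∂₂S(x, y)` is the derivative of `T⁻[u]`; since `x ↦ ∂₂S(x, y)` is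
injective, the minimizer is unique. Conversely, if the minimizer `x₀` at `y` is unique,
compactness forces the minimizers `x_t` at nearby `t` to converge to `x₀`. Then
`S x_t t - S x_t y ≤ T⁻[u] t - T⁻[u] y ≤ S x₀ t - S x₀ y`, and by the mean value theorem and the
continuity of `∂₂S` both bounds are `∂₂S(x₀, y) (t - y) + o(‖t - y‖)`.
-/

section Envelope

variable {X E : Type*} [TopologicalSpace X]

theorem tendsto_of_unique_minimizer [TopologicalSpace E] {f : X → E → ℝ}
    (hf : Continuous fun p : X × E => f p.1 p.2) {x₀ : X} {y : E}
    (huniq : ∀ x, f x y ≤ f x₀ y → x = x₀) {m : E → X} {K : Set X} (hK : IsCompact K)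
    (hmK : ∀ᶠ t in 𝓝 y, m t ∈ K) (hm : ∀ᶠ t in 𝓝 y, f (m t) t ≤ f x₀ t) :
    Tendsto m (𝓝 y) (𝓝 x₀) := by
  refine hK.tendsto_nhds_of_unique_mapClusterPt hmK fun x _ hx => huniq x (not_lt.mp fun hlt => ?_)
  have hgap : ∀ᶠ p in 𝓝 (x, y), f x₀ p.2 < f p.1 p.2 :=
    ContinuousAt.eventually_lt (hf.comp (continuous_const.prodMk continuous_snd)).continuousAt
      hf.continuousAt hlt
  rw [nhds_prod_eq] at hgap
  obtain ⟨pa, hpa, pb, hpb, hp⟩ := eventually_prod_iff.mp hgap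
  obtain ⟨t, hmt, hbt, hle⟩ := ((hx.frequently hpa).and_eventually (hpb.and hm)).exists
  exact (hp hmt hbt).not_ge hle

variable [NormedAddCommGroup E] [NormedSpace ℝ E]

theorem eventually_norm_sub_sub_le_of_continuousAt {f : X → E → ℝ} {D : X × E → E →L[ℝ] ℝ}
    (hf : ∀ x t, HasFDerivAt (f x) (D (x, t)) t) {x₀ : X} {y : E} (hD : ContinuousAt D (x₀, y))
    {ε : ℝ} (hε : 0 < ε) :
    ∀ᶠ q in 𝓝 (x₀, y), ‖f q.1 q.2 - f q.1 y - D (x₀, y) (q.2 - y)‖ ≤ ε * ‖q.2 - y‖ := by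
  have hnear : ∀ᶠ q in 𝓝 (x₀, y), ‖D q - D (x₀, y)‖ ≤ ε := by
    simpa only [dist_eq_norm] using hD.eventually (Metric.closedBall_mem_nhds _ hε)
  rw [nhds_prod_eq] at hnear ⊢
  obtain ⟨pa, hpa, pb, hpb, hp⟩ := eventually_prod_iff.mp hnear
  obtain ⟨η, hη, hball⟩ := Metric.eventually_nhds_iff_ball.mp hpb
  filter_upwards [hpa.prod_mk (Metric.ball_mem_nhds y hη)] with ⟨x, t⟩ ⟨hx, ht⟩
  have hmvt := (convex_ball y η).norm_image_sub_le_of_norm_hasFDerivWithin_le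
    (f := fun s => f x s - D (x₀, y) s)
    (fun z _ => ((hf x z).sub (D (x₀, y)).hasFDerivAt).hasFDerivWithinAt)
    (fun z hz => hp hx (hball z hz)) (Metric.mem_ball_self hη) ht
  simpa only [map_sub, sub_sub_sub_comm] using hmvt

theorem hasFDerivAt_of_tendsto_minimizer {f : X → E → ℝ} {D : X × E → E →L[ℝ] ℝ}
    (hf : ∀ x t, HasFDerivAt (f x) (D (x, t)) t) {x₀ : X} {y : E} (hD : ContinuousAt D (x₀, y))
    {V : E → ℝ} (hle : ∀ x t, V t ≤ f x t) (hy : V y = f x₀ y) {m : E → X}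
    (hm : ∀ᶠ t in 𝓝 y, f (m t) t ≤ V t) (hmx₀ : Tendsto m (𝓝 y) (𝓝 x₀)) :
    HasFDerivAt V (D (x₀, y)) y := by
  rw [hasFDerivAt_iff_isLittleO, Asymptotics.isLittleO_iff]
  intro ε hε
  have hest := eventually_norm_sub_sub_le_of_continuousAt hf hD hε
  filter_upwards [(tendsto_const_nhds.prodMk_nhds tendsto_id).eventually hest,
    (hmx₀.prodMk_nhds tendsto_id).eventually hest, hm] with t hupper hlower hmt
  simp only [id, Real.norm_eq_abs, abs_le] at hupper hlower ⊢
  have := hle x₀ t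
  have := hle (m t) y
  constructor <;> linarith [hupper.2, hlower.1]

theorem HasFDerivAt.eq_of_eventuallyLE_of_eq {f g : E → ℝ} {f' g' : E →L[ℝ] ℝ} {y : E}
    (hf : HasFDerivAt f f' y) (hg : HasFDerivAt g g' y) (hle : g ≤ᶠ[𝓝 y] f) (heq : g y = f y) :
    f' = g' := by
  have hmin : IsLocalMin (fun t => f t - g t) y :=
    hle.mono fun t ht => by simpa only [heq, sub_self, sub_nonneg] using ht
  exact sub_eq_zero.mp (hmin.hasFDerivAt_eq_zero (hf.sub hg))

end Envelope

section LaxOleinik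

variable {d : ℕ} {S : (Fin d → ℝ) → (Fin d → ℝ) → ℝ} {u : (Fin d → ℝ) → ℝ}

theorem ZPeriodic.exists_forall_le (hup : ZPeriodic u) (hu : Continuous u) :
    ∃ z, ∀ x, u z ≤ u x := by
  obtain ⟨z, -, hz⟩ := (isCompact_Icc (a := (0 : Fin d → ℝ)) (b := 1)).exists_isMinOn
    (Set.nonempty_Icc.mpr zero_le_one) hu.continuousOn
  refine ⟨z, fun x => ?_⟩
  have hfract : u x = u fun i => Int.fract (x i) := by
    rw [← hup (fun i => ⌊x i⌋) (fun i => Int.fract (x i))]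
    congr 1
    ext i
    exact (Int.fract_add_floor (x i)).symm
  exact hfract ▸ hz ⟨fun i => Int.fract_nonneg _, fun i => (Int.fract_lt_one _).le⟩

theorem Coercive.exists_norm_sub_lt (hco : Coercive S) (M : ℝ) :
    ∃ R, ∀ x y, S x y < M → ‖x - y‖ < R := by
  obtain ⟨R, hR⟩ := hco M
  exact ⟨R, fun x y hlt => lt_of_not_ge fun hge => (hR x y hge).not_gt hlt⟩

theorem Coercive.exists_forall_add_le (hco : Coercive S)
    (hS : Continuous fun p : (Fin d → ℝ) × (Fin d → ℝ) => S p.1 p.2) (hu : Continuous u)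
    (hup : ZPeriodic u) (y : Fin d → ℝ) : ∃ x₀, ∀ x, u x₀ + S x₀ y ≤ u x + S x y := by
  obtain ⟨z, hz⟩ := hup.exists_forall_le hu
  obtain ⟨R, hR⟩ := hco.exists_norm_sub_lt (u y + S y y - u z)
  refine (hu.add (hS.comp (continuous_id.prodMk continuous_const))).exists_forall_le' y ?_
  rw [eventually_iff, Metric.mem_cocompact_iff_closedBall_compl_subset y]
  refine ⟨R, fun x hx => ?_⟩
  have hfar : R < ‖x - y‖ := by simpa [dist_eq_norm] using hx
  have := hz x
  show u y + S y y ≤ u x + S x y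
  by_contra! hlt
  exact (hR x y (by linarith)).not_gt hfar

theorem Tminus_eq_of_forall_le {x₀ y : Fin d → ℝ} (h : ∀ x, u x₀ + S x₀ y ≤ u x + S x y) :
    Tminus S u y = u x₀ + S x₀ y :=
  le_antisymm (ciInf_le ⟨_, Set.forall_mem_range.mpr h⟩ x₀) (le_ciInf h)

theorem exists_Tminus_eq (hco : Coercive S)
    (hS : Continuous fun p : (Fin d → ℝ) × (Fin d → ℝ) => S p.1 p.2) (hu : Continuous u)
    (hup : ZPeriodic u) (y : Fin d → ℝ) : ∃ x, Tminus S u y = u x + S x y :=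
  (hco.exists_forall_add_le hS hu hup y).imp fun _ => Tminus_eq_of_forall_le

theorem Tminus_le (hco : Coercive S)
    (hS : Continuous fun p : (Fin d → ℝ) × (Fin d → ℝ) => S p.1 p.2) (hu : Continuous u)
    (hup : ZPeriodic u) (x y : Fin d → ℝ) : Tminus S u y ≤ u x + S x y := by
  obtain ⟨x₀, hx₀⟩ := hco.exists_forall_add_le hS hu hup y
  exact (Tminus_eq_of_forall_le hx₀).trans_le (hx₀ x)

theorem exists_eventually_Tminus_eq_imp_mem_closedBall (hco : Coercive S)
    (hS : Continuous fun p : (Fin d → ℝ) × (Fin d → ℝ) => S p.1 p.2) (hu : Continuous u)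
    (hup : ZPeriodic u) (y : Fin d → ℝ) :
    ∃ R, ∀ᶠ t in 𝓝 y, ∀ x, Tminus S u t = u x + S x t → x ∈ Metric.closedBall y R := by
  obtain ⟨z, hz⟩ := hup.exists_forall_le hu
  obtain ⟨R, hR⟩ := hco.exists_norm_sub_lt (u y + S y y + 1 - u z)
  have hSy : ContinuousAt (fun t => S y t) y :=
    (hS.comp (continuous_const.prodMk continuous_id)).continuousAt
  refine ⟨R + 1, ?_⟩
  filter_upwards [hSy.eventually (Iio_mem_nhds (lt_add_one (S y y))),
    Metric.ball_mem_nhds y one_pos] with t hSt hty x hx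
  have := Tminus_le hco hS hu hup y t
  have := hz x
  have hxt := hR x t (by linarith)
  rw [Metric.mem_ball, dist_eq_norm] at hty
  rw [Metric.mem_closedBall, dist_eq_norm]
  calc ‖x - y‖ = ‖(x - t) + (t - y)‖ := by rw [sub_add_sub_cancel]
    _ ≤ ‖x - t‖ + ‖t - y‖ := norm_add_le _ _
    _ ≤ R + 1 := by linarith

end LaxOleinik

theorem unique_min_iff_differentiable_general {d : ℕ} (S : (Fin d → ℝ) → (Fin d → ℝ) → ℝ)
    (hS : Continuous fun p : (Fin d → ℝ) × (Fin d → ℝ) => S p.1 p.2)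
    (hco : Coercive S)
    (hfer : Ferromagnetic S)
    (u : (Fin d → ℝ) → ℝ) (hu : Continuous u) (hup : ZPeriodic u)
    (y : Fin d → ℝ) :
    (∃! x : Fin d → ℝ, Tminus S u y = u x + S x y) ↔
      DifferentiableAt ℝ (Tminus S u) y := by
  obtain ⟨hC1, -, hinj⟩ := hfer
  set D := fun q => (fderiv ℝ (fun p : (Fin d → ℝ) × (Fin d → ℝ) => S p.1 p.2) q).comp
    (ContinuousLinearMap.inr ℝ (Fin d → ℝ) (Fin d → ℝ))
  have hD : Continuous D := (hC1.continuous_fderiv one_ne_zero).clm_comp continuous_const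
  have hSx : ∀ x t, HasFDerivAt (fun s => S x s) (D (x, t)) t := fun x t =>
    (hC1.differentiable one_ne_zero (x, t)).hasFDerivAt.comp t (hasFDerivAt_prodMk_right x t)
  have hf : ∀ x t, HasFDerivAt (fun s => u x + S x s) (D (x, t)) t :=
    fun x t => (hSx x t).const_add (u x)
  have hle := Tminus_le hco hS hu hup
  constructor
  · rintro ⟨x₀, hx₀, huniq⟩
    choose m hm using exists_Tminus_eq hco hS hu hup
    obtain ⟨R, hR⟩ := exists_eventually_Tminus_eq_imp_mem_closedBall hco hS hu hup y
    have hmx₀ : Tendsto m (𝓝 y) (𝓝 x₀) :=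
      tendsto_of_unique_minimizer (f := fun x t => u x + S x t) ((hu.comp continuous_fst).add hS)
        (fun x hx => huniq x (le_antisymm (hle x y) (hx.trans hx₀.ge)))
        (isCompact_closedBall y R) (hR.mono fun t ht => ht _ (hm t))
        (Eventually.of_forall fun t => (hm t).symm.trans_le (hle x₀ t))
    exact (hasFDerivAt_of_tendsto_minimizer hf hD.continuousAt hle hx₀
      (Eventually.of_forall fun t => (hm t).ge) hmx₀).differentiableAt
  · intro hdiff
    have hderiv : ∀ x, Tminus S u y = u x + S x y → D (x, y) = fderiv ℝ (Tminus S u) y :=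
      fun x hx => (hf x y).eq_of_eventuallyLE_of_eq hdiff.hasFDerivAt
        (Eventually.of_forall fun t => hle x t) hx
    obtain ⟨h, hh⟩ := hinj y
    obtain ⟨x₀, hx₀⟩ := exists_Tminus_eq hco hS hu hup y
    refine ⟨x₀, hx₀, fun x hx => h.injective ?_⟩
    rw [hh, hh, (hSx x y).fderiv, (hSx x₀ y).fderiv, hderiv x hx, hderiv x₀ hx₀]

/-- T⁻[u] is differentiable at y iff the minimizer in T⁻[u](y) is unique. -/
theorem unique_min_iff_differentiable {d : ℕ} (S : (Fin d → ℝ) → (Fin d → ℝ) → ℝ)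
    (hS : Continuous fun p : (Fin d → ℝ) × (Fin d → ℝ) => S p.1 p.2)
    (hco : Coercive S) (hdp : DiagPeriodic S)
    (hlsc : LocallySemiconcave fun p : (Fin d → ℝ) × (Fin d → ℝ) => S p.1 p.2)
    (hfer : Ferromagnetic S)
    (u : (Fin d → ℝ) → ℝ) (hu : Continuous u) (hup : ZPeriodic u)
    (y : Fin d → ℝ) :
    (∃! x : Fin d → ℝ, Tminus S u y = u x + S x y) ↔
      DifferentiableAt ℝ (Tminus S u) y :=
  unique_min_iff_differentiable_general S hS hco hfer u hu hup y
end

section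
/- Let u be a sub-action, u₋ := lim_{n→∞}(T⁻ⁿ[u] − nS̄) and u₊ := lim_{n→∞}(T⁺ⁿ[u] + nS̄), and u₋₊ := lim_{n→∞}(T⁺ⁿ[u₋] + nS̄). Then u₊ = u₋₊. That is, applying the forward Lax-Oleinik limit to the backward weak K.A.M. limit of a sub-action recovers the forward weak K.A.M. limit of the original sub-action. -/
open Filter Topology

/-!
Since `u` is a sub-action, `u + n S̄ ≤ T⁻ⁿ u`, so `u ≤ u₋`, and monotonicity of `T⁺` gives
`u₊ ≤ u₋₊`. Conversely `T⁺ T⁻ ≤ id`, hence `T⁺ⁿ T⁻ⁿ ≤ id`; if `u₋ ≤ T⁻ⁿ u - n S̄ + ε`, then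
`T⁺ᵏ⁺ⁿ u₋ + (k + n) S̄ ≤ T⁺ᵏ u + k S̄ + ε`, and letting `k → ∞` gives `u₋₊ ≤ u₊ + ε`.

The infima and suprema are only meaningful (rather than junk `0`) for bounded data: `S` is bounded
below because `u` is a bounded sub-action, and bounded above on the diagonal by periodicity, which
keeps every iterate that occurs bounded.
-/

open Set

section Periodic

variable {d : ℕ}

lemma exists_add_intCast_mem_Icc (x : Fin d → ℝ) :
    ∃ m : Fin d → ℤ, (x + fun i => (m i : ℝ)) ∈ Icc (0 : Fin d → ℝ) 1 :=
  ⟨fun i => -⌊x i⌋, fun i => by simp [Int.floor_le],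
    fun i => by
      simp only [Int.cast_neg, Pi.add_apply, Pi.one_apply, add_neg_le_iff_le_add]
      linarith [Int.lt_floor_add_one (x i)]⟩

lemma ZPeriodic.isBounded_range {u : (Fin d → ℝ) → ℝ} (hup : ZPeriodic u)
    (hu : Continuous u) : Bornology.IsBounded (range u) := by
  refine ((isCompact_Icc (a := (0 : Fin d → ℝ)) (b := 1)).image hu).isBounded.subset ?_
  rintro _ ⟨x, rfl⟩
  obtain ⟨m, hm⟩ := exists_add_intCast_mem_Icc x
  exact ⟨_, hm, hup m x⟩

lemma DiagPeriodic.zPeriodic_diag {S : (Fin d → ℝ) → (Fin d → ℝ) → ℝ} (hdp : DiagPeriodic S) :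
    ZPeriodic fun x => S x x :=
  fun m x => hdp m x x

end Periodic

lemma TendstoUniformly.exists_forall_le_add {α : Type*} {F : ℕ → α → ℝ} {f : α → ℝ}
    (h : TendstoUniformly F f atTop) {ε : ℝ} (hε : 0 < ε) : ∃ n, ∀ x, f x ≤ F n x + ε :=
  (Metric.tendstoUniformly_iff.1 h ε hε).exists.imp fun _ hn x =>
    (sub_le_iff_le_add'.1 (le_abs_self _ |>.trans (Real.dist_eq _ _ ▸ hn x).le))

section LaxOleinik

variable {d : ℕ} {S : (Fin d → ℝ) → (Fin d → ℝ) → ℝ} {c C : ℝ} {v w : (Fin d → ℝ) → ℝ}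

lemma Tminus_le_s11 (hc : ∀ x y, c ≤ S x y) (hv : BddBelow (range v)) (x y : Fin d → ℝ) :
    Tminus S v y ≤ v x + S x y := by
  obtain ⟨b, hb⟩ := hv
  refine ciInf_le ⟨b + c, ?_⟩ x
  rintro _ ⟨z, rfl⟩
  exact add_le_add (hb ⟨z, rfl⟩) (hc z y)

lemma le_Tplus (hc : ∀ x y, c ≤ S x y) (hw : BddAbove (range w)) (x y : Fin d → ℝ) :
    w y - S x y ≤ Tplus S w x := by
  obtain ⟨b, hb⟩ := hw
  refine le_ciSup (f := fun y => w y - S x y) ⟨b - c, ?_⟩ y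
  rintro _ ⟨z, rfl⟩
  exact sub_le_sub (hb ⟨z, rfl⟩) (hc x z)

lemma bddBelow_range_Tminus (hc : ∀ x y, c ≤ S x y) (hv : BddBelow (range v)) :
    BddBelow (range (Tminus S v)) := by
  obtain ⟨b, hb⟩ := hv
  refine ⟨b + c, ?_⟩
  rintro _ ⟨y, rfl⟩
  exact le_ciInf fun x => add_le_add (hb ⟨x, rfl⟩) (hc x y)

lemma bddAbove_range_Tminus (hc : ∀ x y, c ≤ S x y) (hC : ∀ x, S x x ≤ C)
    (hv : BddBelow (range v)) (hv' : BddAbove (range v)) :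
    BddAbove (range (Tminus S v)) := by
  obtain ⟨b, hb⟩ := hv'
  refine ⟨b + C, ?_⟩
  rintro _ ⟨y, rfl⟩
  exact (Tminus_le_s11 hc hv y y).trans (add_le_add (hb ⟨y, rfl⟩) (hC y))

lemma bddAbove_range_Tplus (hc : ∀ x y, c ≤ S x y) (hw : BddAbove (range w)) :
    BddAbove (range (Tplus S w)) := by
  obtain ⟨b, hb⟩ := hw
  refine ⟨b - c, ?_⟩
  rintro _ ⟨x, rfl⟩
  exact ciSup_le fun y => sub_le_sub (hb ⟨y, rfl⟩) (hc x y)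

lemma bddAbove_range_Tplus_iterate (hc : ∀ x y, c ≤ S x y) (hw : BddAbove (range w)) (n : ℕ) :
    BddAbove (range ((Tplus S)^[n] w)) :=
  Function.Iterate.rec (fun f => BddAbove (range f)) hw
    (fun _ => bddAbove_range_Tplus hc) n

lemma bdd_range_Tminus_iterate (hc : ∀ x y, c ≤ S x y) (hC : ∀ x, S x x ≤ C)
    (hv : BddBelow (range v)) (hv' : BddAbove (range v)) (n : ℕ) :
    BddBelow (range ((Tminus S)^[n] v)) ∧ BddAbove (range ((Tminus S)^[n] v)) :=
  Function.Iterate.rec (fun f => BddBelow (range f) ∧ BddAbove (range f)) ⟨hv, hv'⟩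
    (fun _ h => ⟨bddBelow_range_Tminus hc h.1, bddAbove_range_Tminus hc hC h.1 h.2⟩) n

lemma Tplus_le_Tplus_add (hc : ∀ x y, c ≤ S x y) (hw : BddAbove (range w)) {e : ℝ}
    (h : ∀ x, v x ≤ w x + e) (x : Fin d → ℝ) :
    Tplus S v x ≤ Tplus S w x + e :=
  ciSup_le fun y => by linarith [h y, le_Tplus hc hw x y]

lemma Tplus_iterate_le_Tplus_iterate_add (hc : ∀ x y, c ≤ S x y) (hw : BddAbove (range w))
    {e : ℝ} (h : ∀ x, v x ≤ w x + e) (n : ℕ) (x : Fin d → ℝ) :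
    (Tplus S)^[n] v x ≤ (Tplus S)^[n] w x + e := by
  induction n generalizing x with
  | zero => exact h x
  | succ n ih =>
    simp only [Function.iterate_succ_apply']
    exact Tplus_le_Tplus_add hc (bddAbove_range_Tplus_iterate hc hw n) ih x

lemma Tplus_Tminus_le (hc : ∀ x y, c ≤ S x y) (hv : BddBelow (range v)) (x : Fin d → ℝ) :
    Tplus S (Tminus S v) x ≤ v x :=
  ciSup_le fun y => sub_le_iff_le_add.2 (Tminus_le_s11 hc hv x y)

lemma Tplus_iterate_Tminus_iterate_le (hc : ∀ x y, c ≤ S x y) (hC : ∀ x, S x x ≤ C)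
    (hv : BddBelow (range v)) (hv' : BddAbove (range v)) (n : ℕ) (x : Fin d → ℝ) :
    (Tplus S)^[n] ((Tminus S)^[n] v) x ≤ v x := by
  induction n generalizing x with
  | zero => rfl
  | succ n ih =>
    obtain ⟨hn, hn'⟩ := bdd_range_Tminus_iterate hc hC hv hv' n
    rw [Function.iterate_succ_apply, Function.iterate_succ_apply']
    calc (Tplus S)^[n] (Tplus S (Tminus S ((Tminus S)^[n] v))) x
        ≤ (Tplus S)^[n] ((Tminus S)^[n] v) x + 0 :=
          Tplus_iterate_le_Tplus_iterate_add hc hn'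
            (fun z => by simpa using Tplus_Tminus_le hc hn z) n x
      _ ≤ v x := by simpa using ih x

lemma Tplus_iterate_add_le_of_le_Tminus_iterate (hc : ∀ x y, c ≤ S x y) (hC : ∀ x, S x x ≤ C)
    (hv : BddBelow (range v)) (hv' : BddAbove (range v)) {n : ℕ} {e : ℝ}
    (h : ∀ x, w x ≤ (Tminus S)^[n] v x + e) (k : ℕ) (x : Fin d → ℝ) :
    (Tplus S)^[k + n] w x ≤ (Tplus S)^[k] v x + e := by
  have hn : ∀ z, (Tplus S)^[n] w z ≤ v z + e := fun z =>
    (Tplus_iterate_le_Tplus_iterate_add hc (bdd_range_Tminus_iterate hc hC hv hv' n).2 h n z).trans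
      (by linarith [Tplus_iterate_Tminus_iterate_le hc hC hv hv' n z])
  rw [Function.iterate_add_apply]
  exact Tplus_iterate_le_Tplus_iterate_add hc hv' hn k x

lemma add_natCast_mul_le_Tminus_iterate {Sbar : ℝ} {u : (Fin d → ℝ) → ℝ}
    (hsub : ∀ x y, u y - u x ≤ S x y - Sbar) (n : ℕ) (y : Fin d → ℝ) :
    u y + n * Sbar ≤ (Tminus S)^[n] u y := by
  induction n generalizing y with
  | zero => simp
  | succ n ih =>
    rw [Function.iterate_succ_apply']
    exact le_ciInf fun x => by push_cast; linarith [ih x, hsub x y]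

lemma limit_Tplus_iterate_le_of_le (hc : ∀ x y, c ≤ S x y) (hw : BddAbove (range w))
    (hvw : ∀ x, v x ≤ w x) {Sbar a b : ℝ} {x : Fin d → ℝ}
    (ha : Tendsto (fun n : ℕ => (Tplus S)^[n] v x + n * Sbar) atTop (𝓝 a))
    (hb : Tendsto (fun n : ℕ => (Tplus S)^[n] w x + n * Sbar) atTop (𝓝 b)) :
    a ≤ b :=
  le_of_tendsto_of_tendsto' ha hb fun n => by
    simpa using Tplus_iterate_le_Tplus_iterate_add hc hw (e := 0) (by simpa using hvw) n x

lemma limit_Tplus_iterate_le_of_le_Tminus_iterate (hc : ∀ x y, c ≤ S x y)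
    (hC : ∀ x, S x x ≤ C) (hv : BddBelow (range v)) (hv' : BddAbove (range v)) {Sbar a b : ℝ}
    (hwv : ∀ ε > 0, ∃ n : ℕ, ∀ x, w x ≤ (Tminus S)^[n] v x - n * Sbar + ε) {x : Fin d → ℝ}
    (ha : Tendsto (fun n : ℕ => (Tplus S)^[n] w x + n * Sbar) atTop (𝓝 a))
    (hb : Tendsto (fun n : ℕ => (Tplus S)^[n] v x + n * Sbar) atTop (𝓝 b)) :
    a ≤ b := by
  refine le_of_forall_pos_le_add fun ε hε => ?_
  obtain ⟨n, hn⟩ := hwv ε hε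
  have hshift : Tendsto (fun k : ℕ => (Tplus S)^[k + n] w x + ((k + n : ℕ) : ℝ) * Sbar)
      atTop (𝓝 a) := (tendsto_add_atTop_iff_nat n).2 ha
  refine le_of_tendsto_of_tendsto' hshift (hb.add_const ε) fun k => ?_
  have := Tplus_iterate_add_le_of_le_Tminus_iterate hc hC hv hv'
    (w := w) (e := ε - n * Sbar) (fun z => by linarith [hn z]) k x
  push_cast
  linarith

end LaxOleinik

theorem forward_limit_of_backward_limit_general {d : ℕ}
    (S : (Fin d → ℝ) → (Fin d → ℝ) → ℝ)
    (hS : Continuous fun p : (Fin d → ℝ) × (Fin d → ℝ) => S p.1 p.2)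
    (hdp : DiagPeriodic S) (Sbar : ℝ)
    (u : (Fin d → ℝ) → ℝ) (hu : Continuous u) (hup : ZPeriodic u)
    (hsub : ∀ x y, u y - u x ≤ S x y - Sbar)
    (um up ump : (Fin d → ℝ) → ℝ)
    (h1 : TendstoUniformly (fun (n : ℕ) (x : Fin d → ℝ) =>
      (Tminus S)^[n] u x - n * Sbar) um Filter.atTop)
    (h2 : TendstoUniformly (fun (n : ℕ) (x : Fin d → ℝ) =>
      (Tplus S)^[n] u x + n * Sbar) up Filter.atTop)
    (h3 : TendstoUniformly (fun (n : ℕ) (x : Fin d → ℝ) =>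
      (Tplus S)^[n] um x + n * Sbar) ump Filter.atTop) :
    up = ump := by
  have hu_bdd := hup.isBounded_range hu
  obtain ⟨a, ha⟩ := hu_bdd.bddBelow
  obtain ⟨b, hb⟩ := hu_bdd.bddAbove
  have hc : ∀ x y, Sbar + a - b ≤ S x y := fun x y => by
    linarith [hsub x y, ha ⟨y, rfl⟩, hb ⟨x, rfl⟩]
  obtain ⟨C, hC⟩ := (hdp.zPeriodic_diag.isBounded_range
    (hS.comp (continuous_id.prodMk continuous_id))).bddAbove
  replace hC : ∀ x, S x x ≤ C := fun x => hC ⟨x, rfl⟩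
  have hum_le : ∀ ε > 0, ∃ n : ℕ, ∀ x, um x ≤ (Tminus S)^[n] u x - n * Sbar + ε :=
    fun _ hε => h1.exists_forall_le_add hε
  have hu_le_um : ∀ x, u x ≤ um x := fun x => ge_of_tendsto' (h1.tendsto_at x) fun n => by
    linarith [add_natCast_mul_le_Tminus_iterate hsub n x]
  have hum_above : BddAbove (range um) := by
    obtain ⟨n, hn⟩ := hum_le 1 one_pos
    obtain ⟨B, hB⟩ := (bdd_range_Tminus_iterate hc hC hu_bdd.bddBelow hu_bdd.bddAbove n).2
    exact ⟨B - n * Sbar + 1, by rintro _ ⟨x, rfl⟩; linarith [hn x, hB ⟨x, rfl⟩]⟩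
  funext x
  exact le_antisymm (limit_Tplus_iterate_le_of_le hc hum_above hu_le_um
      (h2.tendsto_at x) (h3.tendsto_at x))
    (limit_Tplus_iterate_le_of_le_Tminus_iterate hc hC hu_bdd.bddBelow hu_bdd.bddAbove hum_le
      (h3.tendsto_at x) (h2.tendsto_at x))

/-- The forward limit of the backward weak K.A.M. limit of a sub-action equals
the forward weak K.A.M. limit of the sub-action: u₊ = u₋₊. -/
theorem forward_limit_of_backward_limit {d : ℕ}
    (S : (Fin d → ℝ) → (Fin d → ℝ) → ℝ)
    (hS : Continuous fun p : (Fin d → ℝ) × (Fin d → ℝ) => S p.1 p.2)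
    (hco : Coercive S) (hdp : DiagPeriodic S) (Sbar : ℝ)
    (u : (Fin d → ℝ) → ℝ) (hu : Continuous u) (hup : ZPeriodic u)
    (hsub : ∀ x y, u y - u x ≤ S x y - Sbar)
    (um up ump : (Fin d → ℝ) → ℝ)
    (h1 : TendstoUniformly (fun (n : ℕ) (x : Fin d → ℝ) =>
      (Tminus S)^[n] u x - n * Sbar) um Filter.atTop)
    (h2 : TendstoUniformly (fun (n : ℕ) (x : Fin d → ℝ) =>
      (Tplus S)^[n] u x + n * Sbar) up Filter.atTop)
    (h3 : TendstoUniformly (fun (n : ℕ) (x : Fin d → ℝ) =>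
      (Tplus S)^[n] um x + n * Sbar) ump Filter.atTop) :
    up = ump :=
  forward_limit_of_backward_limit_general S hS hdp Sbar u hu hup hsub um up ump h1 h2 h3
end
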